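/- Let A and B be positive definite complex n×n matrices and let f : (0,∞) → (0,∞) be a continuous function that is operator monotone decreasing and operator log-convex. Then f(A + B) ≤ f((3A + B)/2) ♯ f((A + 3B)/2) ≤ f(2A) ♯ f(2B) ≤ f(2A) ∇ f(2B) ≤ f(A) ∇ f(B) in the Loewner order, where ♯ and ∇ denote the (unweighted, t = 1/2) geometric and arithmetic means. -/

import Mathlib

open Matrix ComplexOrder

/-- Real power of a matrix via the continuous functional calculus
(for a positive definite matrix this is the usual functional-calculus power). -/
noncomputable def mpow {n : ℕ} (A : Matrix (Fin n) (Fin n) ℂ) (t : ℝ) :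
    Matrix (Fin n) (Fin n) ℂ :=
  cfc (fun x : ℝ => x ^ t) A

/-- The weighted geometric mean `A ♯ₜ B = A^{1/2} (A^{-1/2} B A^{-1/2})^t A^{1/2}`. -/
noncomputable def gm {n : ℕ} (t : ℝ) (A B : Matrix (Fin n) (Fin n) ℂ) :
    Matrix (Fin n) (Fin n) ℂ :=
  mpow A (1/2) * mpow (mpow A (-(1/2)) * B * mpow A (-(1/2))) t * mpow A (1/2)

/-- The weighted arithmetic mean `A ∇ₜ B = (1-t)A + tB`. -/
noncomputable def am {n : ℕ} (t : ℝ) (A B : Matrix (Fin n) (Fin n) ℂ) :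
    Matrix (Fin n) (Fin n) ℂ :=
  (1 - t) • A + t • B

/-- The weighted harmonic mean `A !ₜ B = ((1-t)A⁻¹ + tB⁻¹)⁻¹`. -/
noncomputable def hm {n : ℕ} (t : ℝ) (A B : Matrix (Fin n) (Fin n) ℂ) :
    Matrix (Fin n) (Fin n) ℂ :=
  ((1 - t) • A⁻¹ + t • B⁻¹)⁻¹

/-- The Loewner order: `X ≤ Y` iff `Y - X` is positive semidefinite. -/
noncomputable def loewnerLE {n : ℕ} (X Y : Matrix (Fin n) (Fin n) ℂ) : Prop :=
  (Y - X).PosSemidef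

/-!
The first inequality is log-convexity at `t = 1/2`, because `(3A+B)/2 ∇ (A+3B)/2 = A + B`.
For the second, `(3A+B)/2 = 2A ∇_{1/4} 2B` and `(A+3B)/2 = 2A ∇_{3/4} 2B`, so log-convexity bounds
`f` there by `f(2A) ♯_{1/4} f(2B)` and `f(2A) ♯_{3/4} f(2B)`; the mean `♯` is monotone in each
argument, and the `♯`-midpoint of `X ♯_a Y` and `X ♯_b Y` is `X ♯_{(a+b)/2} Y`. The third is the
operator AM-GM inequality, the scalar inequality `x^t ≤ (1-t) + t x` applied to
`X^{-1/2} Y X^{-1/2}` and conjugated by `X^{1/2}`. The last follows from `f(2X) ≤ f(X)`.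

Symmetry and the midpoint formula for `X ♯ Y` come from its characterisation as the unique
positive solution `G` of the Riccati equation `G X⁻¹ G = Y`.
-/

-- The L2 operator norm makes matrices a C⋆-algebra, so that `CFC.rpow` and its operator
-- monotonicity apply to them.
open scoped MatrixOrder Matrix.Norms.L2Operator

section CStarAlgebra

variable {𝒜 : Type*} [CStarAlgebra 𝒜] [PartialOrder 𝒜] [StarOrderedRing 𝒜] {a : 𝒜}

lemma rpow_half_mul_rpow_half (ha : 0 ≤ a) : a ^ (1/2 : ℝ) * a ^ (1/2 : ℝ) = a := by
  rw [← CFC.sqrt_eq_rpow, CFC.sqrt_mul_sqrt_self a]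

lemma rpow_half_mul_conj_rpow_neg_half_mul_rpow_half (ha : IsStrictlyPositive a) (b : 𝒜) :
    a ^ (1/2 : ℝ) * (a ^ (-(1/2) : ℝ) * b * a ^ (-(1/2) : ℝ)) * a ^ (1/2 : ℝ) = b := by
  calc _ = (a ^ (1/2 : ℝ) * a ^ (-(1/2) : ℝ)) * b * (a ^ (-(1/2) : ℝ) * a ^ (1/2 : ℝ)) := by
        noncomm_ring
    _ = b := by rw [CFC.rpow_mul_rpow_neg _, CFC.rpow_neg_mul_rpow _, one_mul, mul_one]

lemma rpow_le_one_sub_smul_one_add_smul (ha : 0 ≤ a) {t : ℝ} (ht : t ∈ Set.Icc 0 1) :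
    a ^ t ≤ (1 - t) • (1 : 𝒜) + t • a := by
  have hyoung : ∀ x ∈ spectrum ℝ a, x ^ t ≤ (1 - t) + t * x := fun x hx => by
    simpa using Real.geom_mean_le_arith_mean2_weighted (sub_nonneg.2 ht.2) ht.1 zero_le_one
      (spectrum_nonneg_of_nonneg ha hx) (by ring)
  calc a ^ t = cfc (fun x : ℝ => x ^ t) a := CFC.rpow_eq_cfc_real ha
    _ ≤ cfc (fun x : ℝ => (1 - t) + t * x) a := cfc_mono hyoung
    _ = (1 - t) • 1 + t • a := by
      rw [cfc_add .., cfc_const .., cfc_const_mul .., cfc_id' ℝ a, Algebra.algebraMap_eq_smul_one]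

end CStarAlgebra

section Means

variable {n : ℕ} {X Y G : Matrix (Fin n) (Fin n) ℂ}

lemma loewnerLE_iff_le : loewnerLE X Y ↔ X ≤ Y := Iff.rfl

lemma posDef_cfc {f : ℝ → ℝ} (hf : ∀ x ∈ Set.Ioi (0 : ℝ), 0 < f x) (hX : X.PosDef) :
    (cfc f X).PosDef :=
  ((cfc_isStrictlyPositive_iff f X (X.finite_real_spectrum.continuousOn f)).2
    fun _ hx => hf _ (hX.isStrictlyPositive.spectrum_pos hx)).posDef

lemma mpow_eq_rpow (hX : 0 ≤ X) (t : ℝ) : mpow X t = X ^ t :=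
  (CFC.rpow_eq_cfc_real hX).symm

lemma inv_eq_rpow_neg_half_mul_rpow_neg_half (hX : X.PosDef) :
    X⁻¹ = X ^ (-(1/2) : ℝ) * X ^ (-(1/2) : ℝ) := by
  refine Matrix.inv_eq_right_inv ?_
  nth_rw 1 [← CFC.rpow_one X, ← CFC.rpow_add hX.isUnit, ← CFC.rpow_add hX.isUnit]
  norm_num [CFC.rpow_zero X]

lemma gm_eq_rpow (hX : 0 ≤ X) (hY : 0 ≤ Y) (t : ℝ) :
    gm t X Y =
      X ^ (1/2 : ℝ) * (X ^ (-(1/2) : ℝ) * Y * X ^ (-(1/2) : ℝ)) ^ t * X ^ (1/2 : ℝ) := by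
  have hC : 0 ≤ X ^ (-(1/2) : ℝ) * Y * X ^ (-(1/2) : ℝ) :=
    conjugate_nonneg_of_nonneg hY CFC.rpow_nonneg
  simp only [gm, mpow_eq_rpow hX, mpow_eq_rpow hC]

lemma isStrictlyPositive_gm (hX : X.PosDef) (hY : Y.PosDef) (t : ℝ) :
    IsStrictlyPositive (gm t X Y) := by
  rw [gm_eq_rpow hX.posSemidef.nonneg hY.posSemidef.nonneg]
  cfc_tac

lemma gm_zero (hX : X.PosDef) (hY : 0 ≤ Y) : gm 0 X Y = X := by
  have hC : 0 ≤ X ^ (-(1/2) : ℝ) * Y * X ^ (-(1/2) : ℝ) :=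
    conjugate_nonneg_of_nonneg hY CFC.rpow_nonneg
  rw [gm_eq_rpow hX.posSemidef.nonneg hY, CFC.rpow_zero _ hC, mul_one,
    rpow_half_mul_rpow_half hX.posSemidef.nonneg]

lemma gm_one (hX : X.PosDef) (hY : 0 ≤ Y) : gm 1 X Y = Y := by
  have hC : 0 ≤ X ^ (-(1/2) : ℝ) * Y * X ^ (-(1/2) : ℝ) :=
    conjugate_nonneg_of_nonneg hY CFC.rpow_nonneg
  rw [gm_eq_rpow hX.posSemidef.nonneg hY, CFC.rpow_one _ hC,
    rpow_half_mul_conj_rpow_neg_half_mul_rpow_half hX.isStrictlyPositive]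

lemma gm_mul_inv_mul_gm (hX : X.PosDef) (hY : Y.PosDef) (s r : ℝ) :
    gm s X Y * (gm r X Y)⁻¹ * gm s X Y = gm (2 * s - r) X Y := by
  have hC : IsStrictlyPositive (X ^ (-(1/2) : ℝ) * Y * X ^ (-(1/2) : ℝ)) := by cfc_tac
  simp only [gm_eq_rpow hX.posSemidef.nonneg hY.posSemidef.nonneg]
  set S := X ^ (1/2 : ℝ)
  set T := X ^ (-(1/2) : ℝ)
  set C := T * Y * T
  have hST : S * T = 1 := CFC.rpow_mul_rpow_neg _
  have hTS : T * S = 1 := CFC.rpow_neg_mul_rpow _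
  have hinv : (S * C ^ r * S)⁻¹ = T * C ^ (-r) * T := by
    refine Matrix.inv_eq_right_inv ?_
    calc S * C ^ r * S * (T * C ^ (-r) * T) = S * (C ^ r * (S * T) * C ^ (-r)) * T := by
          noncomm_ring
      _ = 1 := by rw [hST, mul_one, CFC.rpow_mul_rpow_neg r, mul_one, hST]
  rw [hinv]
  calc S * C ^ s * S * (T * C ^ (-r) * T) * (S * C ^ s * S)
      = S * (C ^ s * (S * T) * C ^ (-r) * (T * S) * C ^ s) * S := by noncomm_ring
    _ = S * C ^ (2 * s - r) * S := by
      rw [hST, hTS, mul_one, mul_one, ← CFC.rpow_add hC.isUnit, ← CFC.rpow_add hC.isUnit]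
      congr 3
      ring

lemma gm_half_mul_inv_mul_self (hX : X.PosDef) (hY : Y.PosDef) :
    gm (1/2) X Y * X⁻¹ * gm (1/2) X Y = Y := by
  have h := gm_mul_inv_mul_gm hX hY (1/2) 0
  rwa [gm_zero hX hY.posSemidef.nonneg, show 2 * (1/2 : ℝ) - 0 = 1 by norm_num, gm_one hX hY.posSemidef.nonneg] at h

-- `K = X^{-1/2} G X^{-1/2}` is a positive square root of `X^{-1/2} Y X^{-1/2}`.
lemma gm_half_eq_of_mul_inv_mul_self (hX : X.PosDef) (hG : 0 ≤ G) (h : G * X⁻¹ * G = Y) :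
    gm (1/2) X Y = G := by
  have hY : 0 ≤ Y := h ▸ (IsSelfAdjoint.of_nonneg hG).conjugate_nonneg hX.inv.posSemidef.nonneg
  rw [gm_eq_rpow hX.posSemidef.nonneg hY]
  set T := X ^ (-(1/2) : ℝ)
  set K := T * G * T
  have hK : 0 ≤ K := conjugate_nonneg_of_nonneg hG CFC.rpow_nonneg
  have hC : T * Y * T = K * K := by
    rw [← h, inv_eq_rpow_neg_half_mul_rpow_neg_half hX]
    simp only [K, T, mul_assoc]
  rw [hC, ← CFC.sqrt_eq_rpow (a := K * K), CFC.sqrt_mul_self K,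
    rpow_half_mul_conj_rpow_neg_half_mul_rpow_half hX.isStrictlyPositive]

lemma gm_half_comm (hX : X.PosDef) (hY : Y.PosDef) : gm (1/2) X Y = gm (1/2) Y X := by
  set G := gm (1/2) X Y
  have hG : IsStrictlyPositive G := isStrictlyPositive_gm hX hY _
  have hGdet : IsUnit G.det := (isUnit_iff_isUnit_det G).mp hG.isUnit
  have hGX : G * X⁻¹ * G = Y := gm_half_mul_inv_mul_self hX hY
  refine (gm_half_eq_of_mul_inv_mul_self hY hG.nonneg ?_).symm
  have hYinv : Y⁻¹ = G⁻¹ * X * G⁻¹ := by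
    rw [← hGX, Matrix.mul_inv_rev, Matrix.mul_inv_rev,
      Matrix.nonsing_inv_nonsing_inv _ ((isUnit_iff_isUnit_det X).mp hX.isUnit), mul_assoc]
  calc G * Y⁻¹ * G = (G * G⁻¹) * X * (G⁻¹ * G) := by rw [hYinv]; noncomm_ring
    _ = X := by
      rw [Matrix.mul_nonsing_inv G hGdet, Matrix.nonsing_inv_mul G hGdet, one_mul, mul_one]

lemma gm_half_gm_gm (hX : X.PosDef) (hY : Y.PosDef) (a b : ℝ) :
    gm (1/2) (gm a X Y) (gm b X Y) = gm ((a + b) / 2) X Y := by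
  refine gm_half_eq_of_mul_inv_mul_self (isStrictlyPositive_gm hX hY a).posDef
    (isStrictlyPositive_gm hX hY _).nonneg ?_
  rw [gm_mul_inv_mul_gm hX hY]
  ring_nf

lemma gm_le_gm_right {Y' : Matrix (Fin n) (Fin n) ℂ} (hX : 0 ≤ X) (hY : 0 ≤ Y) (hYY' : Y ≤ Y')
    {t : ℝ} (ht : t ∈ Set.Icc 0 1) : gm t X Y ≤ gm t X Y' := by
  rw [gm_eq_rpow hX hY, gm_eq_rpow hX (hY.trans hYY')]
  have hS : IsSelfAdjoint (X ^ (1/2 : ℝ)) := by cfc_tac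
  have hT : IsSelfAdjoint (X ^ (-(1/2) : ℝ)) := by cfc_tac
  exact hS.conjugate_le_conjugate (CFC.rpow_le_rpow ht (hT.conjugate_le_conjugate hYY'))

lemma gm_half_le_gm_half_left {X' : Matrix (Fin n) (Fin n) ℂ} (hX : X.PosDef) (hX' : X'.PosDef)
    (hY : Y.PosDef) (hXX' : X ≤ X') : gm (1/2) X Y ≤ gm (1/2) X' Y := by
  rw [gm_half_comm hX hY, gm_half_comm hX' hY]
  exact gm_le_gm_right hY.posSemidef.nonneg hX.posSemidef.nonneg hXX' (by norm_num)

lemma gm_half_le_gm_of_le_gm {X₁ X₂ : Matrix (Fin n) (Fin n) ℂ} (hX : X.PosDef)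
    (hY : Y.PosDef) (hX₁ : X₁.PosDef) (hX₂ : X₂.PosDef) {a b : ℝ} (h₁ : X₁ ≤ gm a X Y)
    (h₂ : X₂ ≤ gm b X Y) : gm (1/2) X₁ X₂ ≤ gm ((a + b) / 2) X Y :=
  calc gm (1/2) X₁ X₂ ≤ gm (1/2) (gm a X Y) X₂ :=
        gm_half_le_gm_half_left hX₁ (isStrictlyPositive_gm hX hY a).posDef hX₂ h₁
    _ ≤ gm (1/2) (gm a X Y) (gm b X Y) :=
        gm_le_gm_right (isStrictlyPositive_gm hX hY a).nonneg hX₂.posSemidef.nonneg h₂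
          (by norm_num)
    _ = gm ((a + b) / 2) X Y := gm_half_gm_gm hX hY a b

lemma gm_le_am (hX : X.PosDef) (hY : 0 ≤ Y) {t : ℝ} (ht : t ∈ Set.Icc 0 1) :
    gm t X Y ≤ am t X Y := by
  have hC : 0 ≤ X ^ (-(1/2) : ℝ) * Y * X ^ (-(1/2) : ℝ) :=
    conjugate_nonneg_of_nonneg hY CFC.rpow_nonneg
  have hS : IsSelfAdjoint (X ^ (1/2 : ℝ)) := by cfc_tac
  rw [gm_eq_rpow hX.posSemidef.nonneg hY]
  refine (hS.conjugate_le_conjugate (rpow_le_one_sub_smul_one_add_smul hC ht)).trans_eq ?_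
  rw [mul_add, add_mul, mul_smul_comm, smul_mul_assoc, mul_smul_comm, smul_mul_assoc, mul_one,
    rpow_half_mul_rpow_half hX.posSemidef.nonneg,
    rpow_half_mul_conj_rpow_neg_half_mul_rpow_half hX.isStrictlyPositive, am]

lemma am_le_am {X' Y' : Matrix (Fin n) (Fin n) ℂ} (hX : X ≤ X') (hY : Y ≤ Y') {t : ℝ}
    (ht : t ∈ Set.Icc 0 1) : am t X Y ≤ am t X' Y' :=
  add_le_add (smul_le_smul_of_nonneg_left hX (sub_nonneg.2 ht.2))
    (smul_le_smul_of_nonneg_left hY ht.1)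

end Means

theorem stmt2_general {n : ℕ} (A B : Matrix (Fin n) (Fin n) ℂ) (hA : A.PosDef) (hB : B.PosDef)
    (f : ℝ → ℝ) (hf_pos : ∀ x ∈ Set.Ioi (0 : ℝ), 0 < f x)
    (hf_dec : ∀ X Y : Matrix (Fin n) (Fin n) ℂ, X.PosDef → Y.PosDef →
      loewnerLE X Y → loewnerLE (cfc f Y) (cfc f X))
    (hf_logcvx : ∀ X Y : Matrix (Fin n) (Fin n) ℂ, X.PosDef → Y.PosDef →
      ∀ t ∈ Set.Icc (0 : ℝ) 1, loewnerLE (cfc f (am t X Y)) (gm t (cfc f X) (cfc f Y))) :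
    loewnerLE (cfc f (A + B))
      (gm (1/2) (cfc f ((2 : ℝ)⁻¹ • ((3 : ℝ) • A + B))) (cfc f ((2 : ℝ)⁻¹ • (A + (3 : ℝ) • B)))) ∧
    loewnerLE
      (gm (1/2) (cfc f ((2 : ℝ)⁻¹ • ((3 : ℝ) • A + B))) (cfc f ((2 : ℝ)⁻¹ • (A + (3 : ℝ) • B))))
      (gm (1/2) (cfc f ((2 : ℝ) • A)) (cfc f ((2 : ℝ) • B))) ∧
    loewnerLE (gm (1/2) (cfc f ((2 : ℝ) • A)) (cfc f ((2 : ℝ) • B)))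
      (am (1/2) (cfc f ((2 : ℝ) • A)) (cfc f ((2 : ℝ) • B))) ∧
    loewnerLE (am (1/2) (cfc f ((2 : ℝ) • A)) (cfc f ((2 : ℝ) • B)))
      (am (1/2) (cfc f A) (cfc f B)) := by
  set W₁ := (2 : ℝ)⁻¹ • ((3 : ℝ) • A + B)
  set W₂ := (2 : ℝ)⁻¹ • (A + (3 : ℝ) • B)
  have hW₁ : W₁.PosDef := ((hA.smul (by norm_num)).add hB).smul (by norm_num)
  have hW₂ : W₂.PosDef := (hA.add (hB.smul (by norm_num))).smul (by norm_num)
  have h2A : ((2 : ℝ) • A).PosDef := hA.smul two_pos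
  have h2B : ((2 : ℝ) • B).PosDef := hB.smul two_pos
  have hf2A := posDef_cfc hf_pos h2A
  have hf2B := posDef_cfc hf_pos h2B
  have hf_dbl : ∀ {X : Matrix (Fin n) (Fin n) ℂ}, X.PosDef → cfc f ((2 : ℝ) • X) ≤ cfc f X :=
    fun hX => hf_dec _ _ hX (hX.smul two_pos)
      (by rw [loewnerLE_iff_le, two_smul]; exact le_add_of_nonneg_left hX.posSemidef.nonneg)
  refine ⟨?_, ?_, gm_le_am hf2A hf2B.posSemidef.nonneg (by norm_num),
    am_le_am (hf_dbl hA) (hf_dbl hB) (by norm_num)⟩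
  · have h := hf_logcvx W₁ W₂ hW₁ hW₂ (1/2) (by norm_num)
    rwa [show am (1/2) W₁ W₂ = A + B by simp only [W₁, W₂, am]; module] at h
  · have h₁ := hf_logcvx _ _ h2A h2B (1/4) (by norm_num)
    have h₂ := hf_logcvx _ _ h2A h2B (3/4) (by norm_num)
    rw [show am (1/4) ((2 : ℝ) • A) ((2 : ℝ) • B) = W₁ by simp only [W₁, am]; module] at h₁
    rw [show am (3/4) ((2 : ℝ) • A) ((2 : ℝ) • B) = W₂ by simp only [W₂, am]; module] at h₂
    have h := gm_half_le_gm_of_le_gm hf2A hf2B (posDef_cfc hf_pos hW₁) (posDef_cfc hf_pos hW₂)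
      h₁ h₂
    rwa [show ((1/4 + 3/4) / 2 : ℝ) = 1/2 by norm_num] at h

/-- Refined subadditivity for operator monotone decreasing (equivalently operator log-convex)
functions: `f(A+B) ≤ f((3A+B)/2) ♯ f((A+3B)/2) ≤ f(2A) ♯ f(2B) ≤ f(2A) ∇ f(2B) ≤ f(A) ∇ f(B)`. -/
theorem stmt2 {n : ℕ} (A B : Matrix (Fin n) (Fin n) ℂ) (hA : A.PosDef) (hB : B.PosDef)
    (f : ℝ → ℝ) (hf_cont : ContinuousOn f (Set.Ioi 0))
    (hf_pos : ∀ x ∈ Set.Ioi (0 : ℝ), 0 < f x)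
    (hf_dec : ∀ X Y : Matrix (Fin n) (Fin n) ℂ, X.PosDef → Y.PosDef →
      loewnerLE X Y → loewnerLE (cfc f Y) (cfc f X))
    (hf_logcvx : ∀ X Y : Matrix (Fin n) (Fin n) ℂ, X.PosDef → Y.PosDef →
      ∀ t ∈ Set.Icc (0 : ℝ) 1, loewnerLE (cfc f (am t X Y)) (gm t (cfc f X) (cfc f Y))) :
    loewnerLE (cfc f (A + B))
      (gm (1/2) (cfc f ((2 : ℝ)⁻¹ • ((3 : ℝ) • A + B))) (cfc f ((2 : ℝ)⁻¹ • (A + (3 : ℝ) • B)))) ∧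
    loewnerLE
      (gm (1/2) (cfc f ((2 : ℝ)⁻¹ • ((3 : ℝ) • A + B))) (cfc f ((2 : ℝ)⁻¹ • (A + (3 : ℝ) • B))))
      (gm (1/2) (cfc f ((2 : ℝ) • A)) (cfc f ((2 : ℝ) • B))) ∧
    loewnerLE (gm (1/2) (cfc f ((2 : ℝ) • A)) (cfc f ((2 : ℝ) • B)))
      (am (1/2) (cfc f ((2 : ℝ) • A)) (cfc f ((2 : ℝ) • B))) ∧
    loewnerLE (am (1/2) (cfc f ((2 : ℝ) • A)) (cfc f ((2 : ℝ) • B)))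
      (am (1/2) (cfc f A) (cfc f B)) :=
  stmt2_general A B hA hB f hf_pos hf_dec hf_logcvx
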